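/- Let M be an n-dimensional 𝒯_a-semisymmetric (N(k),ξ)-semi-Riemannian manifold. Then for all vector fields U,V,W,X: −ε a₀ k R(U,V,W,X) = ε k a₄ S(X,U)g(V,W) + ε k a₅ S(X,V)g(U,W) + ε k a₆ S(X,W)g(U,V) − ε k²(n−1)a₆ g(X,W)g(U,V) − ε k(k a₀ + k(n−1)a₄)g(V,W)g(X,U) − ε k(−k a₀ + k(n−1)a₅)g(U,W)g(X,V) − k²(n−1)(a₂+a₃)g(X,U)η(V)η(W) − k²(n−1)(a₁+a₃)g(X,V)η(U)η(W) − k²(n−1)(a₁+a₂)g(X,W)η(U)η(V) + k(a₂+a₃)S(X,U)η(V)η(W) + k(a₁+a₃)S(X,V)η(U)η(W) + k(a₁+a₂)S(X,W)η(U)η(V), where R(U,V,W,X) = g(R(U,V)W,X). -/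
import Mathlib


open Finset

/-- An algebraic (pointwise) model of an `n`-dimensional semi-Riemannian manifold:
a real vector space of tangent vectors together with a metric `g`, an orthonormal
frame `e` with signs `eps`, and a Riemann curvature tensor `R` satisfying the
standard curvature symmetries.  The Ricci tensor `S`, the Ricci operator `Q` and
the scalar curvature `r` are obtained by tracing with respect to the frame. -/
structure SemiRiemannian (n : ℕ) where
  V : Type
  [instAddCommGroup : AddCommGroup V]
  [instModule : Module ℝ V]
  g : V → V → ℝ
  g_symm : ∀ X Y, g X Y = g Y X
  g_add_left : ∀ X Y Z, g (X + Y) Z = g X Z + g Y Z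
  g_smul_left : ∀ (c : ℝ) (X Y : V), g (c • X) Y = c * g X Y
  e : Fin n → V
  eps : Fin n → ℝ
  eps_unit : ∀ i, eps i = 1 ∨ eps i = -1
  g_frame : ∀ i j, g (e i) (e j) = if i = j then eps i else 0
  expand : ∀ X : V, X = ∑ i, (eps i * g X (e i)) • e i
  R : V → V → V → V
  R_add₁ : ∀ X X' Y Z, R (X + X') Y Z = R X Y Z + R X' Y Z
  R_smul₁ : ∀ (c : ℝ) (X Y Z : V), R (c • X) Y Z = c • R X Y Z
  R_add₂ : ∀ X Y Y' Z, R X (Y + Y') Z = R X Y Z + R X Y' Z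
  R_smul₂ : ∀ (c : ℝ) (X Y Z : V), R X (c • Y) Z = c • R X Y Z
  R_add₃ : ∀ X Y Z Z', R X Y (Z + Z') = R X Y Z + R X Y Z'
  R_smul₃ : ∀ (c : ℝ) (X Y Z : V), R X Y (c • Z) = c • R X Y Z
  R_alt : ∀ X Y Z, R X Y Z = - R Y X Z
  R_skew : ∀ X Y Z W, g (R X Y Z) W = - (g (R X Y W) Z)
  R_pair : ∀ X Y Z W, g (R X Y Z) W = g (R Z W X) Y
  R_bianchi : ∀ X Y Z, R X Y Z + R Y Z X + R Z X Y = 0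

attribute [instance] SemiRiemannian.instAddCommGroup SemiRiemannian.instModule

namespace SemiRiemannian

variable {n : ℕ} (M : SemiRiemannian n)

/-- The Ricci tensor `S`. -/
def S (X Y : M.V) : ℝ := ∑ i, M.eps i * M.g (M.R (M.e i) X Y) (M.e i)

/-- The Ricci operator `Q`, characterised by `g (Q X) Y = S X Y`. -/
def Q (X : M.V) : M.V := ∑ i, (M.eps i * M.S X (M.e i)) • M.e i

/-- The scalar curvature `r`. -/
def r : ℝ := ∑ i, M.eps i * M.S (M.e i) (M.e i)

/-- The `𝒯`-curvature tensor with coefficients `a₀, …, a₇`: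
`𝒯(X,Y)Z = a₀ R(X,Y)Z + a₁ S(Y,Z)X + a₂ S(X,Z)Y + a₃ S(X,Y)Z + a₄ g(Y,Z)QX
  + a₅ g(X,Z)QY + a₆ g(X,Y)QZ + a₇ r (g(Y,Z)X − g(X,Z)Y)`. -/
def T (a₀ a₁ a₂ a₃ a₄ a₅ a₆ a₇ : ℝ) (X Y Z : M.V) : M.V :=
  a₀ • M.R X Y Z + (a₁ * M.S Y Z) • X + (a₂ * M.S X Z) • Y + (a₃ * M.S X Y) • Z
    + (a₄ * M.g Y Z) • M.Q X + (a₅ * M.g X Z) • M.Q Y + (a₆ * M.g X Y) • M.Q Z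
    + (a₇ * M.r) • (M.g Y Z • X - M.g X Z • Y)

/-- The Ricci tensor `S_𝒯` of the `𝒯`-curvature tensor. -/
def ST (a₀ a₁ a₂ a₃ a₄ a₅ a₆ a₇ : ℝ) (X Y : M.V) : ℝ :=
  (a₀ + (n : ℝ) * a₁ + a₂ + a₃ + a₅ + a₆) * M.S X Y
    + (a₄ + ((n : ℝ) - 1) * a₇) * M.r * M.g X Y

/-- `ξ` belongs to the `k`-nullity distribution `N(k)`:
`R(X,Y)ξ = k (g(Y,ξ)X − g(X,ξ)Y)`. -/
def Nullity (k : ℝ) (ξ : M.V) : Prop :=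
  ∀ X Y : M.V, M.R X Y ξ = k • (M.g Y ξ • X - M.g X ξ • Y)

/-- `𝒯_a`-semisymmetry: `R(X,Y) ⬝ 𝒯_a = 0`, where `R(X,Y)` acts as a derivation
on the `(1,3)`-tensor `𝒯_a`. -/
def TSemisymmetric (a₀ a₁ a₂ a₃ a₄ a₅ a₆ a₇ : ℝ) : Prop :=
  ∀ X Y U V W : M.V,
    M.R X Y (M.T a₀ a₁ a₂ a₃ a₄ a₅ a₆ a₇ U V W)
      - M.T a₀ a₁ a₂ a₃ a₄ a₅ a₆ a₇ (M.R X Y U) V W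
      - M.T a₀ a₁ a₂ a₃ a₄ a₅ a₆ a₇ U (M.R X Y V) W
      - M.T a₀ a₁ a₂ a₃ a₄ a₅ a₆ a₇ U V (M.R X Y W) = 0

end SemiRiemannian

namespace SemiRiemannian

variable {n : ℕ} (M : SemiRiemannian n)

lemma g_zero_left (Y : M.V) : M.g 0 Y = 0 := by
  have h := M.g_smul_left 0 0 Y
  simpa using h

lemma g_zero_right (X : M.V) : M.g X 0 = 0 := by
  rw [M.g_symm]; exact M.g_zero_left X

lemma g_add_right (X Y Z : M.V) : M.g X (Y + Z) = M.g X Y + M.g X Z := by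
  rw [M.g_symm, M.g_add_left, M.g_symm Y, M.g_symm Z]

lemma g_smul_right (c : ℝ) (X Y : M.V) : M.g X (c • Y) = c * M.g X Y := by
  rw [M.g_symm, M.g_smul_left, M.g_symm]

lemma g_sub_left (X Y Z : M.V) : M.g (X - Y) Z = M.g X Z - M.g Y Z := by
  have h := M.g_add_left (X - Y) Y Z
  rw [sub_add_cancel] at h
  linarith

lemma g_sub_right (X Y Z : M.V) : M.g X (Y - Z) = M.g X Y - M.g X Z := by
  rw [M.g_symm, M.g_sub_left, M.g_symm Y, M.g_symm Z]

lemma g_neg_left (X Y : M.V) : M.g (-X) Y = - M.g X Y := by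
  have h := M.g_smul_left (-1) X Y
  simpa using h

lemma g_sum_left {ι : Type*} (s : Finset ι) (f : ι → M.V) (Y : M.V) :
    M.g (∑ i ∈ s, f i) Y = ∑ i ∈ s, M.g (f i) Y := by
  induction s using Finset.cons_induction with
  | empty => simp [M.g_zero_left]
  | cons a s ha ih => rw [Finset.sum_cons, M.g_add_left, ih, Finset.sum_cons]

lemma g_sum_right {ι : Type*} (s : Finset ι) (f : ι → M.V) (X : M.V) :
    M.g X (∑ i ∈ s, f i) = ∑ i ∈ s, M.g X (f i) := by
  rw [M.g_symm, M.g_sum_left]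
  exact Finset.sum_congr rfl fun i _ => M.g_symm _ _

lemma gext {X Y : M.V} (h : ∀ Z, M.g X Z = M.g Y Z) : X = Y := by
  rw [M.expand X, M.expand Y]
  exact Finset.sum_congr rfl fun i _ => by rw [h]

lemma eps_sq (i : Fin n) : M.eps i * M.eps i = 1 := by
  rcases M.eps_unit i with h | h <;> rw [h] <;> norm_num

lemma gsum (X Y : M.V) :
    ∑ i, M.eps i * (M.g X (M.e i) * M.g Y (M.e i)) = M.g X Y := by
  conv_rhs => rw [M.expand Y]
  rw [M.g_sum_right]
  exact Finset.sum_congr rfl fun i _ => by rw [M.g_smul_right, M.g_symm X (M.e i)]; ring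

lemma R_sub₁ (X X' Y Z : M.V) : M.R (X - X') Y Z = M.R X Y Z - M.R X' Y Z := by
  have h := M.R_add₁ (X - X') X' Y Z
  rw [sub_add_cancel] at h
  rw [h]; abel

lemma R_sub₂ (X Y Y' Z : M.V) : M.R X (Y - Y') Z = M.R X Y Z - M.R X Y' Z := by
  have h := M.R_add₂ X (Y - Y') Y' Z
  rw [sub_add_cancel] at h
  rw [h]; abel

lemma R_sub₃ (X Y Z Z' : M.V) : M.R X Y (Z - Z') = M.R X Y Z - M.R X Y Z' := by
  have h := M.R_add₃ X Y (Z - Z') Z'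
  rw [sub_add_cancel] at h
  rw [h]; abel

lemma S_add₁ (X X' Y : M.V) : M.S (X + X') Y = M.S X Y + M.S X' Y := by
  rw [S, S, S, ← Finset.sum_add_distrib]
  exact Finset.sum_congr rfl fun i _ => by rw [M.R_add₂, M.g_add_left]; ring

lemma S_smul₁ (c : ℝ) (X Y : M.V) : M.S (c • X) Y = c * M.S X Y := by
  rw [S, S, Finset.mul_sum]
  exact Finset.sum_congr rfl fun i _ => by rw [M.R_smul₂, M.g_smul_left]; ring

lemma S_sub₁ (X X' Y : M.V) : M.S (X - X') Y = M.S X Y - M.S X' Y := by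
  have h := M.S_add₁ (X - X') X' Y
  rw [sub_add_cancel] at h
  linarith

lemma S_add₂ (X Y Y' : M.V) : M.S X (Y + Y') = M.S X Y + M.S X Y' := by
  rw [S, S, S, ← Finset.sum_add_distrib]
  exact Finset.sum_congr rfl fun i _ => by rw [M.R_add₃, M.g_add_left]; ring

lemma S_smul₂ (c : ℝ) (X Y : M.V) : M.S X (c • Y) = c * M.S X Y := by
  rw [S, S, Finset.mul_sum]
  exact Finset.sum_congr rfl fun i _ => by rw [M.R_smul₃, M.g_smul_left]; ring

lemma S_sub₂ (X Y Y' : M.V) : M.S X (Y - Y') = M.S X Y - M.S X Y' := by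
  have h := M.S_add₂ X (Y - Y') Y'
  rw [sub_add_cancel] at h
  linarith

lemma S_zero₂ (X : M.V) : M.S X 0 = 0 := by
  have h := M.S_smul₂ 0 X 0
  simpa using h

lemma S_sum₂ {ι : Type*} (s : Finset ι) (X : M.V) (f : ι → M.V) :
    M.S X (∑ i ∈ s, f i) = ∑ i ∈ s, M.S X (f i) := by
  induction s using Finset.cons_induction with
  | empty => simp [M.S_zero₂]
  | cons a s ha ih => rw [Finset.sum_cons, M.S_add₂, ih, Finset.sum_cons]

lemma S_symm (X Y : M.V) : M.S X Y = M.S Y X := by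
  rw [S, S]
  refine Finset.sum_congr rfl fun i _ => ?_
  have h1 : M.g (M.R (M.e i) X Y) (M.e i) = M.g (M.R Y (M.e i) (M.e i)) X := M.R_pair _ _ _ _
  rw [h1, M.R_alt Y (M.e i), M.g_neg_left, M.R_skew]
  ring

lemma gQ (X Y : M.V) : M.g (M.Q X) Y = M.S X Y := by
  conv_rhs => rw [M.expand Y]
  rw [M.S_sum₂, Q, M.g_sum_left]
  exact Finset.sum_congr rfl fun i _ => by
    rw [M.S_smul₂, M.g_smul_left, M.g_symm (M.e i) Y]; ring

lemma gQ' (X Y : M.V) : M.g Y (M.Q X) = M.S X Y := by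
  rw [M.g_symm]; exact M.gQ X Y

lemma Q_add (X X' : M.V) : M.Q (X + X') = M.Q X + M.Q X' := by
  rw [Q, Q, Q, ← Finset.sum_add_distrib]
  exact Finset.sum_congr rfl fun i _ => by rw [M.S_add₁, mul_add, add_smul]

lemma Q_smul (c : ℝ) (X : M.V) : M.Q (c • X) = c • M.Q X := by
  rw [Q, Q, Finset.smul_sum]
  exact Finset.sum_congr rfl fun i _ => by
    rw [M.S_smul₁, smul_smul]; ring_nf

lemma Q_sub (X X' : M.V) : M.Q (X - X') = M.Q X - M.Q X' := by
  have h := M.Q_add (X - X') X'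
  rw [sub_add_cancel] at h
  rw [h]; abel

section Nullity

variable {M} {k : ℝ} {ξ : M.V} (hk : M.Nullity k ξ)
include hk

lemma S_xi_right (X : M.V) : M.S X ξ = k * ((n : ℝ) - 1) * M.g X ξ := by
  rw [S]
  have hterm : ∀ i ∈ Finset.univ, M.eps i * M.g (M.R (M.e i) X ξ) (M.e i)
      = k * M.g X ξ - k * (M.eps i * (M.g ξ (M.e i) * M.g X (M.e i))) := by
    intro i _
    rw [hk, M.g_smul_left, M.g_sub_left, M.g_smul_left, M.g_smul_left, M.g_frame,
      M.g_symm (M.e i) ξ]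
    simp only [if_pos rfl, eq_self_iff_true, if_true]
    linear_combination (k * M.g X ξ) * M.eps_sq i
  rw [Finset.sum_congr rfl hterm, Finset.sum_sub_distrib, Finset.sum_const,
    ← Finset.mul_sum, M.gsum ξ X, Finset.card_univ, Fintype.card_fin,
    M.g_symm ξ X]
  ring

lemma S_xi_left (X : M.V) : M.S ξ X = k * ((n : ℝ) - 1) * M.g X ξ := by
  rw [M.S_symm]; exact S_xi_right hk X

lemma Q_xi : M.Q ξ = (k * ((n : ℝ) - 1)) • ξ := by
  apply M.gext
  intro Z
  rw [M.gQ, S_xi_left hk, M.g_smul_left, M.g_symm ξ Z]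

lemma R_xi_first (A Z : M.V) :
    M.R ξ A Z = k • (M.g A Z • ξ - M.g Z ξ • A) := by
  apply M.gext
  intro D
  rw [M.R_pair, hk Z D, M.g_smul_left, M.g_sub_left, M.g_smul_left, M.g_smul_left,
    M.g_smul_left, M.g_sub_left, M.g_smul_left, M.g_smul_left,
    M.g_symm Z A, M.g_symm D ξ, M.g_symm D A]
  ring

lemma gR_xi (A B C : M.V) :
    M.g (M.R A B C) ξ = k * (M.g A ξ * M.g B C - M.g B ξ * M.g A C) := by
  rw [M.R_skew, hk A B, M.g_smul_left, M.g_sub_left, M.g_smul_left, M.g_smul_left]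
  ring

end Nullity

end SemiRiemannian

/-- Theorem 6.3: the curvature identity on a
`𝒯_a`-semisymmetric `(N(k),ξ)`-semi-Riemannian manifold. -/
theorem Ta_semisymmetric_curvature_identity
    (n : ℕ) (M : SemiRiemannian n) (k ε : ℝ) (ξ : M.V) (η : M.V → ℝ)
    (hε : ε = 1 ∨ ε = -1) (hξ : M.g ξ ξ = ε)
    (hη : ∀ X : M.V, η X = ε * M.g X ξ)
    (hk : M.Nullity k ξ)
    (a₀ a₁ a₂ a₃ a₄ a₅ a₆ a₇ : ℝ)
    (hsemi : M.TSemisymmetric a₀ a₁ a₂ a₃ a₄ a₅ a₆ a₇) :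
    ∀ U V W X : M.V,
      -(ε * a₀ * k) * M.g (M.R U V W) X =
        ε * k * a₄ * M.S X U * M.g V W
        + ε * k * a₅ * M.S X V * M.g U W
        + ε * k * a₆ * M.S X W * M.g U V
        - ε * k^2 * ((n : ℝ) - 1) * a₆ * M.g X W * M.g U V
        - ε * k * (k * a₀ + k * ((n : ℝ) - 1) * a₄) * M.g V W * M.g X U
        - ε * k * (-(k * a₀) + k * ((n : ℝ) - 1) * a₅) * M.g U W * M.g X V
        - k^2 * ((n : ℝ) - 1) * (a₂ + a₃) * M.g X U * η V * η W
        - k^2 * ((n : ℝ) - 1) * (a₁ + a₃) * M.g X V * η U * η W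
        - k^2 * ((n : ℝ) - 1) * (a₁ + a₂) * M.g X W * η U * η V
        + k * (a₂ + a₃) * M.S X U * η V * η W
        + k * (a₁ + a₃) * M.S X V * η U * η W
        + k * (a₁ + a₂) * M.S X W * η U * η V := by
  intro U V W X
  have hR1 := SemiRiemannian.R_xi_first hk
  have hRxi := SemiRiemannian.gR_xi hk
  have hSxi1 := SemiRiemannian.S_xi_left hk
  have hSxi2 := SemiRiemannian.S_xi_right hk
  have hQxi := SemiRiemannian.Q_xi hk
  have Hs := congrArg (fun z => M.g z ξ) (hsemi ξ X U V W)
  simp only [SemiRiemannian.T, hR1, hk, hRxi, hSxi1, hSxi2, hQxi,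
    M.g_add_left, M.g_sub_left, M.g_smul_left, M.g_add_right, M.g_sub_right,
    M.g_smul_right, M.g_zero_left,
    M.S_add₁, M.S_smul₁, M.S_sub₁, M.S_add₂, M.S_smul₂, M.S_sub₂,
    M.Q_add, M.Q_smul, M.Q_sub,
    M.R_add₁, M.R_smul₁, M.R_sub₁, M.R_add₂, M.R_smul₂, M.R_sub₂,
    M.R_add₃, M.R_smul₃, M.R_sub₃,
    M.gQ, M.gQ', hξ] at Hs
  simp only [M.g_symm V U, M.g_symm W U, M.g_symm W V,
    M.g_symm U X, M.g_symm V X, M.g_symm W X,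
    M.g_symm ξ U, M.g_symm ξ V, M.g_symm ξ W, M.g_symm ξ X,
    M.g_symm X (M.R U V W),
    M.S_symm U X, M.S_symm V X, M.S_symm W X,
    M.S_symm V U, M.S_symm W U, M.S_symm W V] at Hs
  simp only [hη]
  rcases hε with rfl | rfl <;> linear_combination -Hs
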